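/- If s ∈ [0, √2] and f^(n)(s) = 0 for some n ∈ ℕ, then s ∈ ℤ[√2]. -/

import Mathlib

noncomputable section

/-- `β = √2 - 1`. -/
def β : ℝ := Real.sqrt 2 - 1

/-- `ω = √2 + 1`. -/
def ω : ℝ := Real.sqrt 2 + 1

/-- The break points `Δ_i`. -/
def Δ (i : ℤ) : ℝ :=
  if i < 0 then β ^ i.natAbs
  else if i = 0 then β
  else Real.sqrt 2 - β ^ i.natAbs

/-- The intervals `I_i`. -/
def Iint (i : ℤ) : Set ℝ :=
  if i < 0 then Set.Ioc (Δ (i - 1)) (Δ i)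
  else if i = 0 then Set.Ioo β 1
  else Set.Ico (Δ i) (Δ (i + 1))

/-- The defining formula of `f` on the interval `I_i`. -/
def fval (i : ℤ) (s : ℝ) : ℝ :=
  if i < 0 then ω ^ (i.natAbs + 1) * (Δ i - s)
  else if i = 0 then ω * (s - β)
  else ω ^ (i.natAbs + 1) * (s - Δ i)

/-- `f` is the renormalization map: `f 0 = f √2 = 0` and on each interval `I_i`
    it is given by the corresponding affine formula. These conditions determine
    `f` uniquely on `[0, √2]`. -/
def IsLuroth (f : ℝ → ℝ) : Prop :=
  f 0 = 0 ∧ f (Real.sqrt 2) = 0 ∧ ∀ i : ℤ, ∀ s ∈ Iint i, f s = fval i s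

/-- `ℚ(√2)` as a subset of `ℝ`. -/
def QSqrt2 : Set ℝ := {x | ∃ a b : ℚ, x = (a : ℝ) + (b : ℝ) * Real.sqrt 2}

/-- `ℤ[√2]` as a subset of `ℝ`. -/
def ZSqrt2 : Set ℝ := {x | ∃ m n : ℤ, x = (m : ℝ) + (n : ℝ) * Real.sqrt 2}

/-- `M_d = {s ∈ [0,√2] : d·s ∈ ℤ[√2]}`. -/
def Mset (d : ℤ) : Set ℝ :=
  {s | s ∈ Set.Icc 0 (Real.sqrt 2) ∧ (d : ℝ) * s ∈ ZSqrt2}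

/-!
Every point `s` of `(0, √2)` lies in some `I_i`, where `f s = ω^(|i|+1) · d` with `d` the distance
from `s` to the end point `Δ_i` of `I_i`. As `d ≤ β^|i| - β^(|i|+1) = β^(|i|+1) √2`, `f` maps
`[0, √2]` into itself. Since `Δ_i ∈ ℤ[√2]` and `ω` is a unit of `ℤ[√2]` with inverse `β`, the
formula can be inverted inside `ℤ[√2]`: if `f s ∈ ℤ[√2]` then `s ∈ ℤ[√2]`. Induction along the
orbit finishes the proof.
-/

lemma β_pos : 0 < β := by
  unfold β; linarith [Real.one_lt_sqrt_two]

lemma β_lt_one : β < 1 := by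
  unfold β; linarith [Real.sqrt_two_lt_three_halves]

lemma ω_pos : 0 < ω := by
  unfold ω; positivity

lemma ω_pow_mul_β_pow (n : ℕ) : ω ^ n * β ^ n = 1 := by
  rw [← mul_pow, show ω * β = 1 by unfold ω β; ring_nf; norm_num, one_pow]

lemma ω_pow_succ_mul_β_pow_sub (k : ℕ) : ω ^ (k + 1) * (β ^ k - β ^ (k + 1)) = √2 := by
  have hω : ω - 1 = √2 := by unfold ω; ring
  linear_combination ω * ω_pow_mul_β_pow k - ω_pow_mul_β_pow (k + 1) + hω

def zsqrt2Subring : Subring ℝ :=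
  (Zsqrtd.lift ⟨√2, Real.mul_self_sqrt zero_le_two⟩ : ℤ√2 →+* ℝ).range

lemma mem_zsqrt2Subring {x : ℝ} : x ∈ zsqrt2Subring ↔ x ∈ ZSqrt2 := by
  constructor
  · rintro ⟨a, rfl⟩
    exact ⟨a.re, a.im, rfl⟩
  · rintro ⟨m, n, rfl⟩
    exact ⟨⟨m, n⟩, rfl⟩

lemma sqrt_two_mem_zsqrt2Subring : √2 ∈ zsqrt2Subring :=
  mem_zsqrt2Subring.mpr ⟨0, 1, by simp⟩

lemma β_mem_zsqrt2Subring : β ∈ zsqrt2Subring :=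
  sub_mem sqrt_two_mem_zsqrt2Subring (one_mem _)

lemma Δ_mem_zsqrt2Subring (i : ℤ) : Δ i ∈ zsqrt2Subring := by
  have hβ := β_mem_zsqrt2Subring
  unfold Δ
  split_ifs
  exacts [pow_mem hβ _, hβ, sub_mem sqrt_two_mem_zsqrt2Subring (pow_mem hβ _)]

lemma Δ_neg_natCast {k : ℕ} (hk : 0 < k) : Δ (-k) = β ^ k := by
  simp [Δ, hk]

lemma Δ_natCast {k : ℕ} (hk : 0 < k) : Δ k = √2 - β ^ k := by
  simp [Δ, hk.ne']

lemma Iint_neg_natCast {k : ℕ} (hk : 0 < k) : Iint (-k) = Set.Ioc (β ^ (k + 1)) (β ^ k) := by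
  rw [Iint, if_pos (by omega), Δ_neg_natCast hk, show -(k : ℤ) - 1 = -↑(k + 1) by push_cast; ring,
    Δ_neg_natCast k.succ_pos]

lemma Iint_natCast {k : ℕ} (hk : 0 < k) :
    Iint k = Set.Ico (√2 - β ^ k) (√2 - β ^ (k + 1)) := by
  rw [Iint, if_neg (by omega), if_neg (by omega), Δ_natCast hk, ← Nat.cast_succ,
    Δ_natCast k.succ_pos]

lemma exists_pos_pow_succ_lt_and_le_pow {K : Type*} [Field K] [LinearOrder K]
    [IsStrictOrderedRing K] [Archimedean K] {x y : K} (hx : 0 < x) (hxy : x ≤ y) (hy0 : 0 < y)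
    (hy1 : y < 1) : ∃ k, 0 < k ∧ y ^ (k + 1) < x ∧ x ≤ y ^ k := by
  obtain ⟨k, hk⟩ := exists_nat_pow_near_of_lt_one hx (hxy.trans hy1.le) hy0 hy1
  refine ⟨k, Nat.pos_of_ne_zero ?_, hk⟩
  rintro rfl
  rw [zero_add, pow_one] at hk
  exact hxy.not_gt hk.1

lemma exists_mem_Iint {s : ℝ} (hs : s ∈ Set.Ioo 0 √2) : ∃ i, s ∈ Iint i := by
  obtain ⟨h0, h2⟩ := hs
  have near (x : ℝ) (hx : 0 < x) (hxβ : x ≤ β) :=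
    exists_pos_pow_succ_lt_and_le_pow hx hxβ β_pos β_lt_one
  rcases le_or_gt s β with hsβ | hβs
  · obtain ⟨k, hk, hks⟩ := near s h0 hsβ
    exact ⟨-k, by rwa [Iint_neg_natCast hk]⟩
  rcases lt_or_ge s 1 with hs1 | h1s
  · exact ⟨0, by simpa [Iint] using And.intro hβs hs1⟩
  · obtain ⟨k, hk, hks⟩ := near (√2 - s) (by linarith) (by unfold β; linarith)
    refine ⟨k, ?_⟩
    rw [Iint_natCast hk]
    constructor <;> linarith

def offset (i : ℤ) (s : ℝ) : ℝ :=
  if i < 0 then Δ i - s else s - Δ i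

lemma fval_eq_ω_pow_mul_offset (i : ℤ) (s : ℝ) :
    fval i s = ω ^ (i.natAbs + 1) * offset i s := by
  unfold fval offset
  split_ifs with h
  · rfl
  · subst i; simp [Δ]
  · rfl

lemma offset_mem_Icc {i : ℤ} {s : ℝ} (hs : s ∈ Iint i) :
    offset i s ∈ Set.Icc 0 (β ^ i.natAbs - β ^ (i.natAbs + 1)) := by
  obtain rfl | hi := eq_or_ne i 0
  · simp only [Iint, lt_self_iff_false, if_true, if_false, Set.mem_Ioo] at hs
    simp only [offset, Δ, lt_self_iff_false, if_true, if_false, Int.natAbs_zero, pow_zero,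
      zero_add, pow_one, Set.mem_Icc]
    constructor <;> linarith
  obtain ⟨k, rfl | rfl⟩ := Int.eq_nat_or_neg i
  · have hk : 0 < k := by omega
    rw [Iint_natCast hk, Set.mem_Ico] at hs
    rw [offset, if_neg (by omega), Δ_natCast hk, Int.natAbs_natCast, Set.mem_Icc]
    constructor <;> linarith
  · have hk : 0 < k := by omega
    rw [Iint_neg_natCast hk, Set.mem_Ioc] at hs
    rw [offset, if_pos (by omega), Δ_neg_natCast hk, Int.natAbs_neg, Int.natAbs_natCast,
      Set.mem_Icc]
    constructor <;> linarith

lemma fval_mem_Icc {i : ℤ} {s : ℝ} (hs : s ∈ Iint i) : fval i s ∈ Set.Icc 0 √2 := by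
  obtain ⟨h0, h1⟩ := offset_mem_Icc hs
  rw [fval_eq_ω_pow_mul_offset, ← ω_pow_succ_mul_β_pow_sub i.natAbs]
  have hω := pow_pos ω_pos (i.natAbs + 1)
  exact ⟨mul_nonneg hω.le h0, mul_le_mul_of_nonneg_left h1 hω.le⟩

lemma mem_zsqrt2Subring_of_fval_mem (i : ℤ) {s : ℝ} (h : fval i s ∈ zsqrt2Subring) :
    s ∈ zsqrt2Subring := by
  rw [fval_eq_ω_pow_mul_offset] at h
  set n := i.natAbs + 1
  have hoff : offset i s ∈ zsqrt2Subring := by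
    have hβ := pow_mem β_mem_zsqrt2Subring n
    convert mul_mem hβ h using 1
    linear_combination (-offset i s) * ω_pow_mul_β_pow n
  have hΔ := Δ_mem_zsqrt2Subring i
  unfold offset at hoff
  split_ifs at hoff
  · simpa using sub_mem hΔ hoff
  · simpa using add_mem hΔ hoff

namespace IsLuroth

variable {f : ℝ → ℝ}

lemma exists_eq_fval {s : ℝ} (hf : IsLuroth f) (hs : s ∈ Set.Ioo 0 √2) :
    ∃ i, s ∈ Iint i ∧ f s = fval i s :=
  (exists_mem_Iint hs).imp fun i hi => ⟨hi, hf.2.2 i s hi⟩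

lemma mapsTo_Icc (hf : IsLuroth f) : Set.MapsTo f (Set.Icc 0 √2) (Set.Icc 0 √2) := by
  intro s hs
  rcases Set.eq_endpoints_or_mem_Ioo_of_mem_Icc hs with rfl | rfl | hs
  · simp [hf.1]
  · simp [hf.2.1]
  · obtain ⟨i, hi, hfs⟩ := hf.exists_eq_fval hs
    exact hfs ▸ fval_mem_Icc hi

lemma mem_zsqrt2Subring_of_apply_mem (hf : IsLuroth f) {s : ℝ} (hs : s ∈ Set.Icc 0 √2)
    (h : f s ∈ zsqrt2Subring) : s ∈ zsqrt2Subring := by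
  rcases Set.eq_endpoints_or_mem_Ioo_of_mem_Icc hs with rfl | rfl | hs
  · exact zero_mem _
  · exact sqrt_two_mem_zsqrt2Subring
  · obtain ⟨i, -, hfs⟩ := hf.exists_eq_fval hs
    exact mem_zsqrt2Subring_of_fval_mem i (hfs ▸ h)

end IsLuroth

/-- if the orbit of `s ∈ [0,√2]` reaches `0`, then `s ∈ ℤ[√2]`. -/
theorem luroth_terminating_mem_Zsqrt2 (f : ℝ → ℝ) (hf : IsLuroth f) :
    ∀ s ∈ Set.Icc (0 : ℝ) (Real.sqrt 2),
      (∃ n : ℕ, f^[n] s = 0) → s ∈ ZSqrt2 := by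
  rintro s hs ⟨n, hn⟩
  rw [← mem_zsqrt2Subring]
  induction n generalizing s with
  | zero =>
    rw [Function.iterate_zero_apply] at hn
    exact hn ▸ zero_mem _
  | succ n ih =>
    exact hf.mem_zsqrt2Subring_of_apply_mem hs (ih (f s) (hf.mapsTo_Icc hs) hn)
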